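/- arXiv:2605.26900 — 3 statements merged into one kernel-verified Lean document; each statement's English description precedes it below -/
import Mathlib

section
/- Let d ≥ 1, κ > 0, and let R, S be nonnegative real-valued random variables with E[R²] = E[S²] = 1, and let U, V be random vectors in ℝ^d each distributed according to the uniform probability measure σ_{d-1} on the unit sphere, such that R, S, U, V are mutually independent. Then E[exp(κ R S ⟨U, V⟩)] ≥ E[exp(κ ⟨U, V⟩)], where the left-hand expectation is taken in [0, ∞]. -/
open MeasureTheory Real
open scoped RealInnerProductSpace

/-!
Both exponents are odd under `V ↦ -V`, which preserves the joint law, so `exp` may be replaced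
by `cosh` on both sides. Convexity of `t ↦ cosh (a √t)` gives the tangent-line bound
`cosh a + (a sinh a / 2) (y² - 1) ≤ cosh (a y)` at `t = 1`; integrating it against a law with
`E[Y²] = 1` yields `cosh a ≤ E[cosh (a Y)]`. Applied conditionally on `(U, V)`, first with
`Y = R` and then with `Y = S`, this gives the claim.
-/

namespace Real

lemma convexOn_sinh : ConvexOn ℝ (Set.Ici 0) sinh := by
  refine MonotoneOn.convexOn_of_deriv (convex_Ici 0) continuous_sinh.continuousOn
    differentiable_sinh.differentiableOn ?_
  rw [deriv_sinh, interior_Ici]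
  intro x hx y hy hxy
  rw [cosh_le_cosh, abs_of_pos hx, abs_of_pos hy]
  exact hxy

lemma sinh_mul_le_mul_sinh {a s : ℝ} (ha : 0 ≤ a) (hs₀ : 0 ≤ s) (hs₁ : s ≤ 1) :
    sinh (s * a) ≤ s * sinh a := by
  simpa using convexOn_sinh.2 (Set.mem_Ici.2 ha) Set.self_mem_Ici hs₀ (sub_nonneg.2 hs₁)
    (add_sub_cancel s 1)

lemma mul_sinh_le_sinh_mul {a s : ℝ} (ha : 0 ≤ a) (hs : 1 ≤ s) :
    s * sinh a ≤ sinh (s * a) := by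
  have hs₀ : 0 < s := zero_lt_one.trans_le hs
  have := sinh_mul_le_mul_sinh (mul_nonneg hs₀.le ha) (inv_nonneg.2 hs₀.le)
    (inv_le_one_of_one_le₀ hs)
  rwa [inv_mul_cancel_left₀ hs₀.ne', le_inv_mul_iff₀ hs₀] at this

lemma cosh_add_mul_sq_sub_one_le_cosh_mul_of_nonneg {a y : ℝ} (ha : 0 ≤ a) (hy : 0 ≤ y) :
    cosh a + a * sinh a / 2 * (y ^ 2 - 1) ≤ cosh (a * y) := by
  set ψ : ℝ → ℝ := fun t => cosh (t * a) - a * sinh a / 2 * t ^ 2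
  have hψ : ∀ t, HasDerivAt ψ (a * (sinh (t * a) - t * sinh a)) t := by
    intro t
    refine ((hasDerivAt_mul_const a).cosh.sub
      ((hasDerivAt_pow 2 t).const_mul (a * sinh a / 2))).congr_deriv ?_
    push_cast
    ring
  have hψd : Differentiable ℝ ψ := fun t => (hψ t).differentiableAt
  suffices ψ 1 ≤ ψ y by simp only [ψ, one_mul, one_pow, mul_comm y a] at this; linarith
  rcases le_total y 1 with hy₁ | hy₁
  · refine antitoneOn_of_deriv_nonpos (convex_Icc 0 1) hψd.continuous.continuousOn
      hψd.differentiableOn (fun t ht => ?_) ⟨hy, hy₁⟩ ⟨zero_le_one, le_rfl⟩ hy₁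
    rw [interior_Icc] at ht
    rw [(hψ t).deriv]
    exact mul_nonpos_of_nonneg_of_nonpos ha
      (sub_nonpos.2 (sinh_mul_le_mul_sinh ha ht.1.le ht.2.le))
  · refine monotoneOn_of_deriv_nonneg (convex_Ici 1) hψd.continuous.continuousOn
      hψd.differentiableOn (fun t ht => ?_) Set.self_mem_Ici hy₁ hy₁
    rw [interior_Ici] at ht
    rw [(hψ t).deriv]
    exact mul_nonneg ha (sub_nonneg.2 (mul_sinh_le_sinh_mul ha (le_of_lt ht)))

lemma cosh_add_mul_sq_sub_one_le_cosh_mul (a y : ℝ) :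
    cosh a + a * sinh a / 2 * (y ^ 2 - 1) ≤ cosh (a * y) := by
  have habs : |a| * sinh |a| = a * sinh a := by
    rcases abs_choice a with h | h <;> simp [h, sinh_neg]
  have := cosh_add_mul_sq_sub_one_le_cosh_mul_of_nonneg (abs_nonneg a) (abs_nonneg y)
  rwa [cosh_abs, ← abs_mul, cosh_abs, sq_abs, habs] at this

end Real

lemma ofReal_integral_le_lintegral_ofReal {α : Type*} [MeasurableSpace α] {μ : Measure α}
    {f : α → ℝ} (hf : Integrable f μ) :
    ENNReal.ofReal (∫ x, f x ∂μ) ≤ ∫⁻ x, ENNReal.ofReal (f x) ∂μ := by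
  calc ENNReal.ofReal (∫ x, f x ∂μ)
      ≤ ENNReal.ofReal (∫⁻ x, ENNReal.ofReal (f x) ∂μ).toReal := by
        rw [integral_eq_lintegral_pos_part_sub_lintegral_neg_part hf]
        exact ENNReal.ofReal_le_ofReal (sub_le_self _ ENNReal.toReal_nonneg)
    _ ≤ ∫⁻ x, ENNReal.ofReal (f x) ∂μ := ENNReal.ofReal_toReal_le

lemma ofReal_cosh_le_lintegral_ofReal_cosh_mul (ν : Measure ℝ) [IsProbabilityMeasure ν]
    (h₂ : ∫ y, y ^ 2 ∂ν = 1) (a : ℝ) :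
    ENNReal.ofReal (cosh a) ≤ ∫⁻ y, ENNReal.ofReal (cosh (a * y)) ∂ν := by
  have hint : Integrable (fun y => y ^ 2) ν := by
    by_contra h
    simp [integral_undef h] at h₂
  have hdev : Integrable (fun y => a * sinh a / 2 * (y ^ 2 - 1)) ν :=
    (hint.sub (integrable_const 1)).const_mul _
  have hmean : ∫ y, cosh a + a * sinh a / 2 * (y ^ 2 - 1) ∂ν = cosh a := by
    rw [integral_add (integrable_const _) hdev,
      integral_const_mul, integral_sub hint (integrable_const 1), h₂]
    simp
  calc ENNReal.ofReal (cosh a)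
      = ENNReal.ofReal (∫ y, cosh a + a * sinh a / 2 * (y ^ 2 - 1) ∂ν) := by rw [hmean]
    _ ≤ ∫⁻ y, ENNReal.ofReal (cosh a + a * sinh a / 2 * (y ^ 2 - 1)) ∂ν :=
        ofReal_integral_le_lintegral_ofReal ((integrable_const _).add hdev)
    _ ≤ ∫⁻ y, ENNReal.ofReal (cosh (a * y)) ∂ν :=
        lintegral_mono fun y => ENNReal.ofReal_le_ofReal (cosh_add_mul_sq_sub_one_le_cosh_mul a y)

lemma lintegral_ofReal_cosh_le_lintegral_lintegral_ofReal_cosh_mul {α : Type*}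
    [MeasurableSpace α] (μ : Measure α) [SFinite μ] (ν : Measure ℝ) [IsProbabilityMeasure ν]
    (h₂ : ∫ y, y ^ 2 ∂ν = 1) {b : α → ℝ} (hb : Measurable b) :
    ∫⁻ x, ENNReal.ofReal (cosh (b x)) ∂μ ≤
      ∫⁻ y, ∫⁻ x, ENNReal.ofReal (cosh (b x * y)) ∂μ ∂ν := by
  rw [lintegral_lintegral_swap (by fun_prop)]
  exact lintegral_mono fun x => ofReal_cosh_le_lintegral_ofReal_cosh_mul ν h₂ (b x)

lemma lintegral_ofReal_exp_eq_lintegral_ofReal_cosh {α : Type*} [MeasurableSpace α]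
    {μ : Measure α} {Φ : α → α} (hΦ : MeasurePreserving Φ μ μ) {f : α → ℝ}
    (hf : Measurable f) (hodd : ∀ x, f (Φ x) = -f x) :
    ∫⁻ x, ENNReal.ofReal (exp (f x)) ∂μ = ∫⁻ x, ENNReal.ofReal (cosh (f x)) ∂μ := by
  have hflip :
      ∫⁻ x, ENNReal.ofReal (exp (-f x)) ∂μ = ∫⁻ x, ENNReal.ofReal (exp (f x)) ∂μ := by
    simp_rw [← hodd]
    exact hΦ.lintegral_comp (f := fun y => ENNReal.ofReal (exp (f y))) (by fun_prop)
  have htwo_cosh : ∀ t : ℝ,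
      2 * ENNReal.ofReal (cosh t) = ENNReal.ofReal (exp t) + ENNReal.ofReal (exp (-t)) := by
    intro t
    rw [← ENNReal.ofReal_add (exp_pos t).le (exp_pos (-t)).le, ← ENNReal.ofReal_ofNat 2,
      ← ENNReal.ofReal_mul zero_le_two, cosh_eq]
    ring_nf
  refine (ENNReal.mul_right_inj two_ne_zero ENNReal.ofNat_ne_top).1 ?_
  rw [← lintegral_const_mul _ (by fun_prop : Measurable fun x => ENNReal.ofReal (cosh (f x)))]
  simp_rw [htwo_cosh]
  rw [lintegral_add_left (by fun_prop), hflip, two_mul]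

lemma lintegral_ofReal_cosh_le_lintegral_ofReal_cosh_mul_mul {β : Type*} [MeasurableSpace β]
    (μ ν : Measure ℝ) [IsProbabilityMeasure μ] [IsProbabilityMeasure ν]
    (hμ : ∫ r, r ^ 2 ∂μ = 1) (hν : ∫ s, s ^ 2 ∂ν = 1) (ρ : Measure β) [SFinite ρ]
    {b : β → ℝ} (hb : Measurable b) :
    ∫⁻ q, ENNReal.ofReal (cosh (b q)) ∂ρ ≤
      ∫⁻ p, ENNReal.ofReal (cosh (b p.2.2 * p.1 * p.2.1)) ∂μ.prod (ν.prod ρ) := by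
  rw [lintegral_prod _ (by fun_prop)]
  calc ∫⁻ q, ENNReal.ofReal (cosh (b q)) ∂ρ
      ≤ ∫⁻ r, ∫⁻ q, ENNReal.ofReal (cosh (b q * r)) ∂ρ ∂μ :=
        lintegral_ofReal_cosh_le_lintegral_lintegral_ofReal_cosh_mul ρ μ hμ hb
    _ ≤ ∫⁻ r, ∫⁻ s, ∫⁻ q, ENNReal.ofReal (cosh (b q * r * s)) ∂ρ ∂ν ∂μ :=
        lintegral_mono fun r =>
          lintegral_ofReal_cosh_le_lintegral_lintegral_ofReal_cosh_mul ρ ν hν (by fun_prop)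
    _ = _ := lintegral_congr fun r => (lintegral_prod
          (fun w : ℝ × β => ENNReal.ofReal (cosh (b w.2 * r * w.1))) (by fun_prop)).symm

theorem stmt7_general {Ω : Type*} [MeasureSpace Ω]
    [IsProbabilityMeasure (volume : Measure Ω)]
    (d : ℕ) (κ : ℝ)
    (σ : Measure (EuclideanSpace ℝ (Fin d))) [IsProbabilityMeasure σ]
    (hσrot : ∀ Q : EuclideanSpace ℝ (Fin d) ≃ₗᵢ[ℝ] EuclideanSpace ℝ (Fin d),
      σ.map Q = σ)
    (R S : Ω → ℝ) (hRm : Measurable R) (hSm : Measurable S)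
    (hR2 : ∫ ω, R ω ^ 2 = 1) (hS2 : ∫ ω, S ω ^ 2 = 1)
    (U V : Ω → EuclideanSpace ℝ (Fin d)) (hU : Measurable U) (hV : Measurable V)
    (hUlaw : Measure.map U volume = σ) (hVlaw : Measure.map V volume = σ)
    (hindep : Measure.map (fun ω => (R ω, S ω, U ω, V ω)) volume =
      (Measure.map R volume).prod ((Measure.map S volume).prod
        ((Measure.map U volume).prod (Measure.map V volume)))) :
    ∫⁻ ω, ENNReal.ofReal (Real.exp (κ * ⟪U ω, V ω⟫)) ≤
      ∫⁻ ω, ENNReal.ofReal (Real.exp (κ * R ω * S ω * ⟪U ω, V ω⟫)) := by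
  set μR := Measure.map R volume
  set μS := Measure.map S volume
  have : IsProbabilityMeasure μR := Measure.isProbabilityMeasure_map hRm.aemeasurable
  have : IsProbabilityMeasure μS := Measure.isProbabilityMeasure_map hSm.aemeasurable
  have hμR : ∫ r, r ^ 2 ∂μR = 1 := by rwa [integral_map hRm.aemeasurable (by fun_prop)]
  have hμS : ∫ s, s ^ 2 ∂μS = 1 := by rwa [integral_map hSm.aemeasurable (by fun_prop)]
  set ρ := σ.prod σ
  set ν := μR.prod (μS.prod ρ)
  have hlaw : MeasurePreserving (fun ω => (R ω, S ω, U ω, V ω)) volume ν :=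
    ⟨by fun_prop, by rw [hindep, hUlaw, hVlaw]⟩
  have hneg : MeasurePreserving Neg.neg σ σ :=
    ⟨measurable_neg, by simpa using hσrot (LinearIsometryEquiv.neg ℝ)⟩
  have hflip : MeasurePreserving (Prod.map id (Prod.map id (Prod.map id Neg.neg))) ν ν :=
    (MeasurePreserving.id μR).prod ((MeasurePreserving.id μS).prod
      ((MeasurePreserving.id σ).prod hneg))
  calc ∫⁻ ω, ENNReal.ofReal (exp (κ * ⟪U ω, V ω⟫))
      = ∫⁻ p, ENNReal.ofReal (exp (κ * ⟪p.2.2.1, p.2.2.2⟫)) ∂ν :=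
        hlaw.lintegral_comp (f := fun p => ENNReal.ofReal (exp (κ * ⟪p.2.2.1, p.2.2.2⟫)))
          (by fun_prop)
    _ = ∫⁻ q, ENNReal.ofReal (cosh (κ * ⟪q.1, q.2⟫)) ∂ρ := by
        rw [lintegral_ofReal_exp_eq_lintegral_ofReal_cosh hflip (by fun_prop)
          (fun p => by simp [inner_neg_right])]
        exact (measurePreserving_snd.comp measurePreserving_snd).lintegral_comp
          (f := fun q : _ × _ => ENNReal.ofReal (cosh (κ * ⟪q.1, q.2⟫))) (by fun_prop)
    _ ≤ ∫⁻ p, ENNReal.ofReal (cosh (κ * ⟪p.2.2.1, p.2.2.2⟫ * p.1 * p.2.1)) ∂ν :=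
        lintegral_ofReal_cosh_le_lintegral_ofReal_cosh_mul_mul μR μS hμR hμS ρ (by fun_prop)
    _ = ∫⁻ p, ENNReal.ofReal (exp (κ * p.1 * p.2.1 * ⟪p.2.2.1, p.2.2.2⟫)) ∂ν := by
        rw [lintegral_ofReal_exp_eq_lintegral_ofReal_cosh hflip (by fun_prop)
          (fun p => by simp [inner_neg_right])]
        exact lintegral_congr fun p => by ring_nf
    _ = ∫⁻ ω, ENNReal.ofReal (exp (κ * R ω * S ω * ⟪U ω, V ω⟫)) :=
        (hlaw.lintegral_comp (by fun_prop)).symm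

/-- let `R, S ≥ 0` with `E[R²] = E[S²] = 1`, and `U, V` uniform on the
unit sphere `S^{d-1} ⊆ ℝ^d`, with `R, S, U, V` mutually independent (their joint law is
the product of the marginals).  Then `E[exp(κ R S ⟨U,V⟩)] ≥ E[exp(κ ⟨U,V⟩)]`, the
left-hand expectation being taken in `[0, ∞]`. -/
theorem stmt7 {Ω : Type*} [MeasureSpace Ω]
    [IsProbabilityMeasure (volume : Measure Ω)]
    (d : ℕ) (hd : 1 ≤ d) (κ : ℝ) (hκ : 0 < κ)
    (σ : Measure (EuclideanSpace ℝ (Fin d))) [IsProbabilityMeasure σ]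
    (hσsupp : σ {x : EuclideanSpace ℝ (Fin d) | ‖x‖ = 1} = 1)
    (hσrot : ∀ Q : EuclideanSpace ℝ (Fin d) ≃ₗᵢ[ℝ] EuclideanSpace ℝ (Fin d),
      σ.map Q = σ)
    (R S : Ω → ℝ) (hRm : Measurable R) (hSm : Measurable S)
    (hR0 : ∀ ω, 0 ≤ R ω) (hS0 : ∀ ω, 0 ≤ S ω)
    (hR2 : ∫ ω, R ω ^ 2 = 1) (hS2 : ∫ ω, S ω ^ 2 = 1)
    (U V : Ω → EuclideanSpace ℝ (Fin d)) (hU : Measurable U) (hV : Measurable V)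
    (hUlaw : Measure.map U volume = σ) (hVlaw : Measure.map V volume = σ)
    (hindep : Measure.map (fun ω => (R ω, S ω, U ω, V ω)) volume =
      (Measure.map R volume).prod ((Measure.map S volume).prod
        ((Measure.map U volume).prod (Measure.map V volume)))) :
    ∫⁻ ω, ENNReal.ofReal (Real.exp (κ * ⟪U ω, V ω⟫)) ≤
      ∫⁻ ω, ENNReal.ofReal (Real.exp (κ * R ω * S ω * ⟪U ω, V ω⟫)) :=
  stmt7_general d κ σ hσrot R S hRm hSm hR2 hS2 U V hU hV hUlaw hVlaw hindep
end

section
/- Let d ≥ 1 and let μ, ν be Borel probability measures on ℝ^d such that for every a ∈ ℝ^d the pushforward of μ under the map x ↦ ⟨a, x⟩ equals the pushforward of ν under the same map. Then μ = ν. -/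
/-! The characteristic function of `μ` at `a` is that of the projection `x ↦ ⟪a, x⟫` of `μ` at `1`,
and a finite measure on a complete separable inner product space is determined by its
characteristic function. -/

open MeasureTheory
open scoped RealInnerProductSpace

namespace MeasureTheory

variable {E : Type*} [NormedAddCommGroup E] [InnerProductSpace ℝ E] [MeasurableSpace E]

lemma charFun_eq_charFun_map_inner [OpensMeasurableSpace E] (μ : Measure E) (a : E) :
    charFun μ a = charFun (μ.map fun x => ⟪a, x⟫) 1 := by
  rw [charFun_eq_charFunDual_toDualMap, charFunDual_eq_charFun_map_one]
  rfl

theorem Measure.ext_of_map_inner [BorelSpace E] [SecondCountableTopology E] [CompleteSpace E]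
    {μ ν : Measure E} [IsFiniteMeasure μ] [IsFiniteMeasure ν]
    (h : ∀ a : E, μ.map (fun x => ⟪a, x⟫) = ν.map (fun x => ⟪a, x⟫)) : μ = ν :=
  Measure.ext_of_charFun <| funext fun a => by
    rw [charFun_eq_charFun_map_inner μ, charFun_eq_charFun_map_inner ν, h a]

end MeasureTheory

theorem stmt14_general (d : ℕ)
    (μ ν : Measure (EuclideanSpace ℝ (Fin d)))
    [IsProbabilityMeasure μ] [IsProbabilityMeasure ν]
    (h : ∀ a : EuclideanSpace ℝ (Fin d),
      Measure.map (fun x => ⟪a, x⟫) μ = Measure.map (fun x => ⟪a, x⟫) ν) :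
    μ = ν :=
  Measure.ext_of_map_inner h

/-- Cramér–Wold: two Borel probability measures on `ℝ^d` (`d ≥ 1`) with
the same one-dimensional projections `x ↦ ⟨a, x⟩` for every `a ∈ ℝ^d` are equal. -/
theorem stmt14 (d : ℕ) (hd : 1 ≤ d)
    (μ ν : Measure (EuclideanSpace ℝ (Fin d)))
    [IsProbabilityMeasure μ] [IsProbabilityMeasure ν]
    (h : ∀ a : EuclideanSpace ℝ (Fin d),
      Measure.map (fun x => ⟪a, x⟫) μ = Measure.map (fun x => ⟪a, x⟫) ν) :
    μ = ν :=
  stmt14_general d μ ν h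
end

section
/- Let μ and ν be Borel probability measures on ℝ and let w : ℝ → ℝ be a measurable function with w(t) > 0 for Lebesgue-almost every t. If ∫_ℝ |φ_μ(t) − φ_ν(t)|² · w(t) dt = 0, then μ = ν. -/
open MeasureTheory

/-- The characteristic function `φ_μ(t) = ∫ exp(i t x) dμ(x)` of a Borel (probability)
measure `μ` on `ℝ`. -/
noncomputable def charFn (μ : Measure ℝ) (t : ℝ) : ℂ :=
  ∫ x, Complex.exp (Complex.I * t * x) ∂μ

/-!
The weight is positive almost everywhere, so the integrand `|φ_μ - φ_ν|² w` vanishing almost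
everywhere forces `φ_μ = φ_ν` almost everywhere; both are continuous, hence they agree
everywhere, and a finite measure on `ℝ` is determined by its characteristic function.
-/

lemma charFn_eq_charFun (μ : Measure ℝ) : charFn μ = charFun μ := by
  ext t
  rw [charFn, charFun_apply_real]
  congr 1 with x
  ring_nf

lemma ae_eq_zero_of_lintegral_norm_sq_mul_eq_zero {α E : Type*} [MeasurableSpace α]
    [NormedAddCommGroup E] {μ : Measure α} {f : α → E} {w : α → ℝ}
    (hf : AEStronglyMeasurable f μ) (hwm : AEMeasurable w μ) (hw : ∀ᵐ t ∂μ, 0 < w t)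
    (h : ∫⁻ t, ENNReal.ofReal (‖f t‖ ^ 2 * w t) ∂μ = 0) :
    f =ᵐ[μ] 0 := by
  have hm : AEMeasurable (fun t => ENNReal.ofReal (‖f t‖ ^ 2 * w t)) μ :=
    ((hf.norm.aemeasurable.pow_const 2).mul hwm).ennreal_ofReal
  filter_upwards [(lintegral_eq_zero_iff' hm).mp h, hw] with t ht hwt
  have hsq : ‖f t‖ ^ 2 * w t ≤ 0 := ENNReal.ofReal_eq_zero.mp ht
  have : ‖f t‖ ^ 2 = 0 := le_antisymm (nonpos_of_mul_nonpos_left hsq hwt) (sq_nonneg _)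
  simpa using this

/-- if `μ, ν` are Borel probability measures on `ℝ`, `w : ℝ → ℝ` is
measurable with `w(t) > 0` for Lebesgue-a.e. `t`, and the weighted `L²` distance
`∫ |φ_μ(t) − φ_ν(t)|² w(t) dt` between their characteristic functions vanishes,
then `μ = ν`. -/
theorem stmt16 (μ ν : Measure ℝ) [IsProbabilityMeasure μ] [IsProbabilityMeasure ν]
    (w : ℝ → ℝ) (hwm : Measurable w) (hw : ∀ᵐ t ∂(volume : Measure ℝ), 0 < w t)
    (h : ∫⁻ t, ENNReal.ofReal (‖charFn μ t - charFn ν t‖ ^ 2 * w t) = 0) :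
    μ = ν := by
  rw [charFn_eq_charFun, charFn_eq_charFun] at h
  have hcont : Continuous fun t => charFun μ t - charFun ν t :=
    continuous_charFun.sub continuous_charFun
  have hae := ae_eq_zero_of_lintegral_norm_sq_mul_eq_zero hcont.aestronglyMeasurable
    hwm.aemeasurable hw h
  refine Measure.ext_of_charFun (sub_eq_zero.mp ?_)
  exact (hcont.ae_eq_iff_eq volume continuous_const).mp hae
end
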